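/- For every positive integer $i$, $\sum_{i_0=0}^{i} \binom{i}{i_0}_q q^{i_0^2} \prod_{j=i_0+1}^{i}(1-q^j) = 1$ as polynomials in $q$. -/
import Mathlib


/-- The indeterminate `q`, viewed in the field of rational functions over `ℚ`. -/
noncomputable def q : RatFunc ℚ := RatFunc.X

/-- The Gaussian (q-)binomial coefficient `(n choose k)_q`. -/
noncomputable def qbinom (n k : ℕ) : RatFunc ℚ :=
  ∏ i ∈ Finset.range k, (1 - q ^ (n - i)) / (1 - q ^ (i + 1))

lemma one_sub_q_pow_ne {j : ℕ} (hj : 0 < j) : (1 : RatFunc ℚ) - q ^ j ≠ 0 := by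
  have h : ((1 : Polynomial ℚ) - Polynomial.X ^ j) ≠ 0 := by
    intro h
    have := congrArg (Polynomial.eval 0) h
    simp [Polynomial.eval_pow, zero_pow hj.ne'] at this
  have := RatFunc.algebraMap_ne_zero (K := ℚ) h
  simpa [q, RatFunc.algebraMap_X, map_sub, map_pow] using this

noncomputable def Pq (m : ℕ) : RatFunc ℚ := ∏ j ∈ Finset.Ioc 0 m, (1 - q ^ j)

lemma Pq_ne (m : ℕ) : Pq m ≠ 0 := by
  unfold Pq
  exact Finset.prod_ne_zero_iff.2 fun j hj => one_sub_q_pow_ne (Finset.mem_Ioc.1 hj).1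

lemma Pq_succ (m : ℕ) : Pq (m + 1) = Pq m * (1 - q ^ (m + 1)) := by
  unfold Pq
  rw [← Finset.prod_Ioc_succ_top (Nat.zero_le _)]

lemma Pq_zero : Pq 0 = 1 := by simp [Pq]

lemma qbinom_eq {n k : ℕ} (h : k ≤ n) : qbinom n k = Pq n / (Pq k * Pq (n - k)) := by
  have hnum : ∏ i ∈ Finset.range k, (1 - q ^ (n - i))
      = ∏ j ∈ Finset.Ioc (n - k) n, (1 - q ^ j) := by
    have hIco : Finset.Ioc (n - k) n = Finset.Ico (n - k + 1) (n + 1) := by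
      ext x; simp
    rw [hIco, Finset.prod_Ico_eq_prod_range]
    have hk : n + 1 - (n - k + 1) = k := by omega
    rw [hk, ← Finset.prod_range_reflect]
    refine Finset.prod_congr rfl fun i hi => ?_
    have hi' := Finset.mem_range.1 hi
    have he : n - (k - 1 - i) = n - k + 1 + i := by omega
    rw [he]
  have hden : ∏ i ∈ Finset.range k, (1 - q ^ (i + 1)) = Pq k := by
    unfold Pq
    have hIco : Finset.Ioc 0 k = Finset.Ico 1 (k + 1) := by ext x; simp; omega
    rw [hIco, Finset.prod_Ico_eq_prod_range]
    simp [add_comm]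
  have hsplit : Pq (n - k) * ∏ j ∈ Finset.Ioc (n - k) n, (1 - q ^ j) = Pq n := by
    unfold Pq
    exact Finset.prod_Ioc_consecutive _ (Nat.zero_le _) (Nat.sub_le _ _)
  unfold qbinom
  rw [Finset.prod_div_distrib, hnum, hden, ← hsplit]
  have h1 := Pq_ne k
  have h2 := Pq_ne (n - k)
  field_simp

lemma qbinom_zero (n : ℕ) : qbinom n 0 = 1 := by simp [qbinom]

lemma qbinom_self (n : ℕ) : qbinom n n = 1 := by
  rw [qbinom_eq le_rfl, Nat.sub_self, Pq_zero, mul_one, div_self (Pq_ne n)]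

lemma qbinom_eq_zero {n k : ℕ} (h : n < k) : qbinom n k = 0 := by
  unfold qbinom
  apply Finset.prod_eq_zero (Finset.mem_range.2 h)
  simp

lemma qbinom_pascal (n k : ℕ) :
    qbinom (n + 1) (k + 1) = qbinom n k + q ^ (k + 1) * qbinom n (k + 1) := by
  rcases lt_trichotomy k n with hkn | rfl | hnk
  · have h1 : k + 1 ≤ n + 1 := by omega
    have h2 : k ≤ n := hkn.le
    have h3 : k + 1 ≤ n := hkn
    rw [qbinom_eq h1, qbinom_eq h2, qbinom_eq h3]
    have e1 : n + 1 - (k + 1) = n - k := by omega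
    have e2 : n - (k + 1) = n - k - 1 := by omega
    rw [e1, e2]
    have e3 : n - k = (n - k - 1) + 1 := by omega
    rw [e3, Pq_succ (n - k - 1), Pq_succ n, Pq_succ k]
    have e4 : n - k - 1 + 1 = n - k := by omega
    have hq : q ^ (n + 1) = q ^ (k + 1) * q ^ (n - k) := by
      rw [← pow_add]; congr 1; omega
    rw [e4, hq]
    have b1 := Pq_ne n
    have b2 := Pq_ne k
    have b3 := Pq_ne (n - k - 1)
    have b4 := one_sub_q_pow_ne (j := k + 1) (by omega)
    have b5 := one_sub_q_pow_ne (j := n - k) (by omega)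
    field_simp
    ring
  · rw [qbinom_self, qbinom_self, qbinom_eq_zero (by omega), mul_zero, add_zero]
  · rw [qbinom_eq_zero (by omega), qbinom_eq_zero (by omega),
      qbinom_eq_zero (by omega), mul_zero, add_zero]

private lemma key (n e : ℕ) :
    ∑ k ∈ Finset.range (n + 1),
      qbinom n k * q ^ (k * (k + e)) * ∏ j ∈ Finset.Icc (k + e + 1) (n + e), (1 - q ^ j)
    = 1 := by
  induction n generalizing e with
  | zero =>
    rw [Finset.sum_range_one, qbinom_zero]
    rw [Finset.Icc_eq_empty (by omega)]
    simp
  | succ n ih =>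
    set g : ℕ → RatFunc ℚ := fun k =>
      qbinom n k * q ^ (k * (k + e) + k) *
        ∏ j ∈ Finset.Icc (k + e + 1) (n + e + 1), (1 - q ^ j) with hgdef
    have step : ∀ k ∈ Finset.range (n + 1),
        qbinom (n + 1) (k + 1) * q ^ ((k + 1) * ((k + 1) + e)) *
            ∏ j ∈ Finset.Icc ((k + 1) + e + 1) ((n + 1) + e), (1 - q ^ j)
          = (qbinom n k * q ^ (k * (k + (e + 1))) *
              ∏ j ∈ Finset.Icc (k + (e + 1) + 1) (n + (e + 1)), (1 - q ^ j))
            + (g (k + 1) - g k) := by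
      intro k hk
      have hk' : k ≤ n := by have := Finset.mem_range.1 hk; omega
      have hb1 : Finset.Icc ((k + 1) + e + 1) ((n + 1) + e)
          = Finset.Icc (k + e + 2) (n + e + 1) := by congr 1 <;> omega
      have hb2 : Finset.Icc (k + (e + 1) + 1) (n + (e + 1))
          = Finset.Icc (k + e + 2) (n + e + 1) := by congr 1 <;> omega
      have hb3 : Finset.Icc ((k + 1) + e + 1) (n + e + 1)
          = Finset.Icc (k + e + 2) (n + e + 1) := by congr 1 <;> omega
      have hsplit : ∏ j ∈ Finset.Icc (k + e + 1) (n + e + 1), (1 - q ^ j)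
          = (1 - q ^ (k + e + 1)) * ∏ j ∈ Finset.Icc (k + e + 2) (n + e + 1), (1 - q ^ j) := by
        rw [← Finset.Ico_add_one_right_eq_Icc, ← Finset.Ico_add_one_right_eq_Icc,
          Finset.prod_eq_prod_Ico_succ_bot (by omega)]
      rw [qbinom_pascal, hb1, hb2, hgdef]
      simp only [hb3, hsplit]
      ring
    rw [Finset.sum_range_succ' _ (n + 1), Finset.sum_congr rfl step,
      Finset.sum_add_distrib, Finset.sum_range_sub g (n + 1)]
    have hg1 : g (n + 1) = 0 := by
      rw [hgdef]; simp [qbinom_eq_zero (Nat.lt_succ_self n)]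
    have hg0 : g 0 = qbinom (n + 1) 0 * q ^ (0 * (0 + e)) *
        ∏ j ∈ Finset.Icc (0 + e + 1) ((n + 1) + e), (1 - q ^ j) := by
      rw [hgdef]
      simp only [qbinom_zero]
      rw [show n + 1 + e = n + e + 1 from by omega]
      simp
    rw [hg1, ih (e + 1), hg0]
    ring


/-- For every positive integer `i`,
`∑_{i₀=0}^{i} (i choose i₀)_q q^(i₀²) ∏_{j=i₀+1}^{i} (1-q^j) = 1`. -/
theorem sum_qbinom_identity_e_zero (i : ℕ) (hi : 0 < i) :
    ∑ i0 ∈ Finset.range (i + 1),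
      qbinom i i0 * q ^ (i0 ^ 2) * ∏ j ∈ Finset.Icc (i0 + 1) i, (1 - q ^ j)
    = 1 := by
  have h := key i 0
  simp only [add_zero] at h
  calc ∑ i0 ∈ Finset.range (i + 1),
      qbinom i i0 * q ^ (i0 ^ 2) * ∏ j ∈ Finset.Icc (i0 + 1) i, (1 - q ^ j)
      = ∑ i0 ∈ Finset.range (i + 1),
        qbinom i i0 * q ^ (i0 * i0) * ∏ j ∈ Finset.Icc (i0 + 1) i, (1 - q ^ j) :=
      Finset.sum_congr rfl fun k _ => by rw [sq]
    _ = 1 := h
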